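/- arXiv:1609.08645 — 2 statements merged into one kernel-verified Lean document; each statement's English description precedes it below -/
import Mathlib

section
/- Let G be a claw-free graph with clique number ω ≥ 3, and suppose G has a stable (independent) set of size 3 and every vertex has degree at most 4(ω − 1). Let v be a vertex whose second neighborhood N²(v) is nonempty, and suppose every vertex of N²(v) has at least k ≥ 2(ω−1)+1 neighbors in N(v). Then the square degree of v satisfies deg_{G²}(v) < 6(ω − 1). -/
open SimpleGraph Finset

variable {V : Type*}

/-- A graph is claw-free if it has no induced `K_{1,3}`. -/
def ClawFree (G : SimpleGraph V) : Prop :=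
  ∀ v a b c : V, G.Adj v a → G.Adj v b → G.Adj v c →
    a ≠ b → a ≠ c → b ≠ c → G.Adj a b ∨ G.Adj a c ∨ G.Adj b c

/-- The square of a graph: join distinct vertices at distance at most 2. -/
def square (G : SimpleGraph V) : SimpleGraph V where
  Adj u w := u ≠ w ∧ (G.Adj u w ∨ ∃ x, G.Adj u x ∧ G.Adj x w)
  symm := by
    constructor
    rintro u w ⟨h1, h2⟩
    refine ⟨h1.symm, ?_⟩
    rcases h2 with h | ⟨x, hx1, hx2⟩
    · exact Or.inl h.symm
    · exact Or.inr ⟨x, hx2.symm, hx1.symm⟩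
  loopless := ⟨fun u h => h.1 rfl⟩

/-- The second neighbourhood of `v` : vertices at distance exactly two from `v`. -/
def secondNbhd (G : SimpleGraph V) (v : V) : Set V :=
  {w | w ≠ v ∧ ¬G.Adj v w ∧ ∃ x, G.Adj v x ∧ G.Adj x w}

/-- The square degree of a vertex. -/
noncomputable def sqDeg (G : SimpleGraph V) (v : V) : ℕ :=
  ((square G).neighborSet v).ncard

/-!
For `u ∈ N(v)`, the neighbours of `u` in `N²(v)` together with `u` form a clique: two
non-adjacent ones would give a claw at `u` with the third leaf `v`. So every vertex of `N(v)`
has at most `ω - 1` neighbours in `N²(v)`, and counting the edges between `N(v)` and `N²(v)`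
both ways gives `|N²(v)| · (2(ω - 1) + 1) ≤ |N(v)| · (ω - 1) ≤ 4(ω - 1)²`, i.e.
`|N²(v)| < 2(ω - 1)`. Adding `deg v ≤ 4(ω - 1)` bounds the square degree.
-/

theorem square_neighborSet (G : SimpleGraph V) (v : V) :
    (square G).neighborSet v = G.neighborSet v ∪ secondNbhd G v := by
  ext w
  simp only [mem_neighborSet, Set.mem_union, secondNbhd, square]
  by_cases hvw : G.Adj v w
  · simp [hvw, hvw.ne]
  · simp [hvw, ne_comm]

theorem sqDeg_le_ncard_neighborSet_add_ncard_secondNbhd (G : SimpleGraph V) (v : V) :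
    sqDeg G v ≤ (G.neighborSet v).ncard + (secondNbhd G v).ncard := by
  rw [sqDeg, square_neighborSet]
  exact Set.ncard_union_le _ _

theorem SimpleGraph.IsClique.ncard_le_cliqueNum [Finite V] {G : SimpleGraph V} {s : Set V}
    (hs : G.IsClique s) : s.ncard ≤ G.cliqueNum := by
  have hfin := s.toFinite
  rw [Set.ncard_eq_toFinset_card s hfin]
  exact IsClique.card_le_cliqueNum (tc := by simpa using hs)

section ClawFree

variable {G : SimpleGraph V} {u v : V}

theorem ClawFree.isClique_insert_adj_secondNbhd (hG : ClawFree G) (hvu : G.Adj v u) :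
    G.IsClique (insert u {w | w ∈ secondNbhd G v ∧ G.Adj u w}) := by
  refine Set.Pairwise.insert (fun a ⟨ha, hua⟩ b ⟨hb, hub⟩ hab => ?_)
    fun a ⟨_, hua⟩ _ => ⟨hua, hua.symm⟩
  rcases hG u v a b hvu.symm hua hub (Ne.symm ha.1) (Ne.symm hb.1) hab with h | h | h
  exacts [absurd h ha.2.1, absurd h hb.2.1, h]

theorem ClawFree.ncard_adj_secondNbhd_lt [Finite V] (hG : ClawFree G) (hvu : G.Adj v u) :
    {w | w ∈ secondNbhd G v ∧ G.Adj u w}.ncard < G.cliqueNum := by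
  have hu : u ∉ {w | w ∈ secondNbhd G v ∧ G.Adj u w} := fun h => h.1.2.1 hvu
  have := (hG.isClique_insert_adj_secondNbhd hvu).ncard_le_cliqueNum
  rwa [Set.ncard_insert_of_notMem hu] at this

theorem ClawFree.ncard_secondNbhd_mul_le [Fintype V] (hG : ClawFree G) (v : V) {k : ℕ}
    (hmin : ∀ w ∈ secondNbhd G v, k ≤ {u | G.Adj v u ∧ G.Adj u w}.ncard) :
    (secondNbhd G v).ncard * k ≤ (G.neighborSet v).ncard * (G.cliqueNum - 1) := by
  classical
  rw [Set.ncard_eq_toFinset_card', Set.ncard_eq_toFinset_card']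
  refine card_mul_le_card_mul (fun w u => G.Adj u w) (fun w hw => ?_) (fun u hu => ?_)
  · convert hmin w (by simpa using hw) using 1
    rw [← Set.ncard_coe_finset, coe_bipartiteAbove]
    simp [mem_neighborSet]
  · have := hG.ncard_adj_secondNbhd_lt (by simpa using hu)
    rw [← Set.ncard_coe_finset, coe_bipartiteBelow]
    simp only [Set.mem_toFinset]
    omega

end ClawFree

theorem stmt_4_general [Fintype V] (G : SimpleGraph V) (hG : ClawFree G)
    (hω : 3 ≤ G.cliqueNum)
    (hdeg : ∀ u : V, (G.neighborSet u).ncard ≤ 4 * (G.cliqueNum - 1))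
    (v : V)
    (k : ℕ) (hk : 2 * (G.cliqueNum - 1) + 1 ≤ k)
    (hmin : ∀ w ∈ secondNbhd G v, k ≤ Set.ncard {u | G.Adj v u ∧ G.Adj u w}) :
    sqDeg G v < 6 * (G.cliqueNum - 1) := by
  have hsq := sqDeg_le_ncard_neighborSet_add_ncard_secondNbhd G v
  have hcount := hG.ncard_secondNbhd_mul_le v hmin
  have hdeg_v := hdeg v
  set m := G.cliqueNum - 1 with hm
  have hm_pos : 1 ≤ m := by omega
  have hN2 : (secondNbhd G v).ncard * (2 * m + 1) ≤ 4 * m * m := calc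
    _ ≤ (secondNbhd G v).ncard * k := Nat.mul_le_mul_left _ hk
    _ ≤ (G.neighborSet v).ncard * m := hcount
    _ ≤ 4 * m * m := Nat.mul_le_mul_right _ hdeg_v
  have hN2_lt : (secondNbhd G v).ncard < 2 * m := by nlinarith
  omega

theorem stmt_4 [Fintype V] (G : SimpleGraph V) (hG : ClawFree G)
    (hω : 3 ≤ G.cliqueNum)
    (hstable : ∃ a b c : V, a ≠ b ∧ a ≠ c ∧ b ≠ c ∧ ¬G.Adj a b ∧ ¬G.Adj a c ∧ ¬G.Adj b c)
    (hdeg : ∀ u : V, (G.neighborSet u).ncard ≤ 4 * (G.cliqueNum - 1))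
    (v : V) (hN2 : (secondNbhd G v).Nonempty)
    (k : ℕ) (hk : 2 * (G.cliqueNum - 1) + 1 ≤ k)
    (hmin : ∀ w ∈ secondNbhd G v, k ≤ Set.ncard {u | G.Adj v u ∧ G.Adj u w}) :
    sqDeg G v < 6 * (G.cliqueNum - 1) :=
  stmt_4_general G hG hω hdeg v k hk hmin
end

section
/- Let G be a claw-free graph with clique number ω, v a vertex of G, and suppose every vertex of the second neighborhood N²(v) has at least k ≥ 1 neighbors in N(v). Then |N²(v)| ≤ (ω − 1)·deg(v)/k, and consequently deg_{G²}(v) ≤ (1 + (ω − 1)/k)·deg(v). -/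
open SimpleGraph Finset

variable {V : Type*}

/-! For `u ∈ N(v)`, the vertex `u` together with its neighbours in `N²(v)` is a clique: two such
neighbours are not adjacent to `v`, so unless they are adjacent to each other they form a claw at `u`
with `v`. Hence every `u ∈ N(v)` has at most `ω - 1` neighbours in `N²(v)`, while every vertex of
`N²(v)` has at least `k` neighbours in `N(v)`; counting the edges between `N(v)` and `N²(v)` in both
ways gives `k |N²(v)| ≤ (ω - 1) deg v`. Finally `N_{G²}(v)` is the disjoint union of `N(v)` and
`N²(v)`. -/

namespace SimpleGraph

variable {G : SimpleGraph V} {v u : V}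

lemma not_adj_of_mem_secondNbhd {w : V} (hw : w ∈ secondNbhd G v) : ¬G.Adj v w := hw.2.1

lemma IsClique.ncard_le_cliqueNum_s5 [Finite V] {s : Set V} (hs : G.IsClique s) :
    s.ncard ≤ G.cliqueNum := by
  rw [Set.ncard_eq_toFinset_card s s.toFinite]
  exact IsClique.card_le_cliqueNum (tc := by simpa using hs)

lemma neighborSet_square (G : SimpleGraph V) (v : V) :
    (square G).neighborSet v = G.neighborSet v ∪ secondNbhd G v := by
  ext w
  by_cases hvw : G.Adj v w
  · simp [square, secondNbhd, hvw, hvw.ne]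
  · simp [square, secondNbhd, hvw, eq_comm]

lemma sqDeg_eq [Finite V] (G : SimpleGraph V) (v : V) :
    sqDeg G v = (G.neighborSet v).ncard + (secondNbhd G v).ncard := by
  rw [sqDeg, neighborSet_square]
  exact Set.ncard_union_eq (Set.disjoint_left.2 fun _ hadj hw ↦ not_adj_of_mem_secondNbhd hw hadj)

lemma ncard_secondNbhd_mul_le [Finite V] {k m : ℝ}
    (hbelow : ∀ w ∈ secondNbhd G v, k ≤ {u | G.Adj v u ∧ G.Adj u w}.ncard)
    (habove : ∀ u ∈ G.neighborSet v, ((G.neighborSet u ∩ secondNbhd G v).ncard : ℝ) ≤ m) :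
    (secondNbhd G v).ncard * k ≤ (G.neighborSet v).ncard * m := by
  classical
  have := Fintype.ofFinite V
  set s := (G.neighborSet v).toFinset
  set t := (secondNbhd G v).toFinset
  have key := Finset.card_nsmul_le_card_nsmul' G.Adj (s := s) (t := t) (m := m) (n := k)
    (fun w hw ↦ by
      have hcard : #(s.bipartiteBelow G.Adj w) = {u | G.Adj v u ∧ G.Adj u w}.ncard := by
        rw [← Set.ncard_coe_finset]; congr 1; ext; simp [s]
      simpa [hcard] using hbelow w (by simpa [t] using hw))
    (fun u hu ↦ by
      have hcard : #(t.bipartiteAbove G.Adj u) = (G.neighborSet u ∩ secondNbhd G v).ncard := by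
        rw [← Set.ncard_coe_finset]; congr 1; ext; simp [t, and_comm]
      simpa [hcard] using habove u (by simpa [s] using hu))
  simpa [s, t, Set.ncard_eq_toFinset_card'] using key

namespace ClawFree

lemma isClique_insert_neighborSet_inter_secondNbhd (hG : ClawFree G) (hvu : G.Adj v u) :
    G.IsClique (insert u (G.neighborSet u ∩ secondNbhd G v)) := by
  refine IsClique.insert (fun a ⟨hua, ha⟩ b ⟨hub, hb⟩ hab ↦ ?_) fun a ⟨hua, _⟩ _ ↦ hua
  have hva : v ≠ a := fun h ↦ ha.1 h.symm
  have hvb : v ≠ b := fun h ↦ hb.1 h.symm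
  rcases hG u v a b hvu.symm hua hub hva hvb hab with h | h | h
  · exact absurd h (not_adj_of_mem_secondNbhd ha)
  · exact absurd h (not_adj_of_mem_secondNbhd hb)
  · exact h

lemma ncard_neighborSet_inter_secondNbhd_add_one_le [Finite V] (hG : ClawFree G)
    (hvu : G.Adj v u) : (G.neighborSet u ∩ secondNbhd G v).ncard + 1 ≤ G.cliqueNum := by
  have hu : u ∉ G.neighborSet u ∩ secondNbhd G v := fun h ↦ not_adj_of_mem_secondNbhd h.2 hvu
  rw [← Set.ncard_insert_of_notMem hu]
  exact (hG.isClique_insert_neighborSet_inter_secondNbhd hvu).ncard_le_cliqueNum_s5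

end ClawFree

end SimpleGraph

theorem stmt_5 [Fintype V] (G : SimpleGraph V) (hG : ClawFree G) (v : V)
    (k : ℕ) (hk : 1 ≤ k)
    (hmin : ∀ w ∈ secondNbhd G v, k ≤ Set.ncard {u | G.Adj v u ∧ G.Adj u w}) :
    ((secondNbhd G v).ncard : ℝ) ≤
        ((G.cliqueNum : ℝ) - 1) * (G.neighborSet v).ncard / k ∧
      (sqDeg G v : ℝ) ≤
        (1 + ((G.cliqueNum : ℝ) - 1) / k) * (G.neighborSet v).ncard := by
  have hk_pos : (0 : ℝ) < k := by exact_mod_cast hk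
  have hcount := ncard_secondNbhd_mul_le (k := k) (m := G.cliqueNum - 1)
    (fun w hw ↦ by exact_mod_cast hmin w hw) fun u hu ↦ by
      have := hG.ncard_neighborSet_inter_secondNbhd_add_one_le hu
      rw [le_sub_iff_add_le]
      exact_mod_cast this
  have hsecond : ((secondNbhd G v).ncard : ℝ) ≤
      ((G.cliqueNum : ℝ) - 1) * (G.neighborSet v).ncard / k := by
    rw [le_div_iff₀ hk_pos]
    linarith
  refine ⟨hsecond, ?_⟩
  rw [sqDeg_eq, Nat.cast_add, add_mul, one_mul, div_mul_eq_mul_div]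
  linarith
end
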